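/- Two cells of a triangular partition τ are both removable if and only if they are consecutive vertices of the convex hull of τ and the line through them does not intersect the convex hull of ℕ² \ τ. -/

import Mathlib

open Set

/-- The positive quadrant of lattice points, representing ℕ² in the paper. -/
def posQuad : Set (ℕ × ℕ) := {c | 1 ≤ c.1 ∧ 1 ≤ c.2}

/-- Embedding of lattice cells into the real plane. -/
noncomputable def toR2 (c : ℕ × ℕ) : ℝ × ℝ := ((c.1 : ℝ), (c.2 : ℝ))

/-- A set of cells is triangular if it consists exactly of the points of ℕ²
lying weakly below some line x/r + y/s = 1 with r, s > 0. -/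
def IsTriangularSet (S : Set (ℕ × ℕ)) : Prop :=
  ∃ r s : ℝ, 0 < r ∧ 0 < s ∧
    S = {c : ℕ × ℕ | 1 ≤ c.1 ∧ 1 ≤ c.2 ∧ (c.1 : ℝ) / r + (c.2 : ℝ) / s ≤ 1}

/-- `S` is the Ferrers diagram of an integer partition. -/
def IsPartitionSet (S : Set (ℕ × ℕ)) : Prop :=
  S.Finite ∧ S ⊆ posQuad ∧
    ∀ c ∈ S, ∀ a b : ℕ, 1 ≤ a → a ≤ c.1 → 1 ≤ b → b ≤ c.2 → (a, b) ∈ S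

/-- A cell is removable if deleting it yields a triangular partition. -/
def RemovableCell (S : Set (ℕ × ℕ)) (c : ℕ × ℕ) : Prop :=
  c ∈ S ∧ IsTriangularSet (S \ {c})

/-- A cell of the complement is addable if adjoining it yields a triangular partition. -/
def AddableCell (S : Set (ℕ × ℕ)) (c : ℕ × ℕ) : Prop :=
  c ∈ posQuad \ S ∧ IsTriangularSet (insert c S)

/-- Two points are consecutive vertices of a convex set if they are distinct
extreme points and the segment between them is a face (an edge) of the set. -/
def ConsecutiveVertices (A : Set (ℝ × ℝ)) (p q : ℝ × ℝ) : Prop :=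
  p ≠ q ∧ p ∈ Set.extremePoints ℝ A ∧ q ∈ Set.extremePoints ℝ A ∧
    IsExtreme ℝ A (segment ℝ p q)

/-!
Write `S = {c ∈ ℕ₊² | α c.1 + β c.2 ≤ 1}`; a cell `c` is removable when a line `u x + v y = 1`
with `u, v > 0` cuts out `S \ {c}`. Both sides of the equivalence amount to an *edge cut*: a line
`a x + b y = 1` through `c₁` and `c₂` that cuts out `S` and meets `S` only on the segment
`[c₁, c₂]`.

Given an edge cut, the line supports `conv S` along `[c₁, c₂]` and lies strictly below
`conv (ℕ₊² \ S)`; tilting it slightly about a point of the segment next to `c₁` cuts off `c₁`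
alone, so `c₁` (and likewise `c₂`) is removable. Conversely, if `[c₁, c₂]` is an edge of `conv S`,
the corner `(1, 1)` lies strictly below its line and the face property keeps all of `S` weakly
below it; the convex set `conv (ℕ₊² \ S)` avoids the line and has points far above it, so it lies
above it. Finally, for two removable cells the cuts of `S`, `S \ {c₁}` and `S \ {c₂}` show that
the line through `c₁` and `c₂` cuts out `S`: a highest cell `d` of `S` above the line would put
`c₁` or `c₂` under a chord of `S`, or reflecting `c₁` or `c₂` in `d` would give an even higher cell.
-/

open AffineMap Filter Topology

section Convex

variable {E : Type*} [AddCommGroup E] [Module ℝ E]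

lemma LinearMap.apply_lineMap_eq (ℓ : E →ₗ[ℝ] ℝ) (p q : E) (r : ℝ) :
    ℓ (lineMap p q r) = ℓ p + r * (ℓ q - ℓ p) := by
  rw [← ℓ.coe_toAffineMap, AffineMap.apply_lineMap, lineMap_apply_ring']
  ring

lemma LinearMap.eq_of_mem_affineSpan_pair (ℓ : E →ₗ[ℝ] ℝ) {p q x : E} {m : ℝ} (hp : ℓ p = m)
    (hq : ℓ q = m) (hx : x ∈ line[ℝ, p, q]) : ℓ x = m := by
  obtain ⟨r, rfl⟩ := mem_affineSpan_pair_iff_exists_lineMap_eq.mp hx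
  rw [ℓ.apply_lineMap_eq, hp, hq]
  ring

lemma eq_of_mem_openSegment_of_le (ℓ : E →ₗ[ℝ] ℝ) {m : ℝ} {x y z : E} (hx : ℓ x ≤ m)
    (hy : ℓ y ≤ m) (hz : z ∈ openSegment ℝ x y) (hzm : m ≤ ℓ z) : ℓ x = m ∧ ℓ y = m := by
  obtain ⟨s, t, hs, ht, hst, rfl⟩ := hz
  simp only [map_add, map_smul, smul_eq_mul] at hzm
  have hm : m = s * m + t * m := by rw [← add_mul, hst, one_mul]
  have := mul_le_mul_of_nonneg_left hx hs.le
  have := mul_le_mul_of_nonneg_left hy ht.le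
  constructor
  · by_contra h
    linarith [mul_lt_mul_of_pos_left (hx.lt_of_ne h) hs]
  · by_contra h
    linarith [mul_lt_mul_of_pos_left (hy.lt_of_ne h) ht]

lemma isExtreme_setOf_eq (ℓ : E →ₗ[ℝ] ℝ) {A : Set E} {m : ℝ} (hA : ∀ x ∈ A, ℓ x ≤ m) :
    IsExtreme ℝ A {x ∈ A | ℓ x = m} := by
  refine ⟨fun x hx => hx.1, fun x hx y hy z hz hzxy => ?_⟩
  exact ⟨hx, (eq_of_mem_openSegment_of_le ℓ (hA x hx) (hA y hy) hzxy hz.2.ge).1⟩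

lemma mem_convexHull_setOf_eq (ℓ : E →ₗ[ℝ] ℝ) {V : Set E} {m : ℝ} (hV : ∀ v ∈ V, ℓ v ≤ m)
    {x : E} (hx : x ∈ convexHull ℝ V) (hxm : ℓ x = m) :
    x ∈ convexHull ℝ {v ∈ V | ℓ v = m} := by
  set F := convexHull ℝ {v ∈ V | ℓ v = m}
  have hF : ∀ y ∈ F, ℓ y = m :=
    fun y hy => convexHull_min (fun v hv => hv.2) (convex_hyperplane ℓ.isLinear m) hy
  -- Below the hyperplane, or on it and then already in `F`: a convex set containing `V`.
  have hconv : Convex ℝ ({y | ℓ y < m} ∪ F) := by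
    have hle : ∀ y ∈ {y | ℓ y < m} ∪ F, ℓ y ≤ m := by
      rintro y (hy | hy)
      exacts [le_of_lt hy, (hF y hy).le]
    refine convex_iff_openSegment_subset.mpr fun y hy z hz w hw => ?_
    have hwm : ℓ w ≤ m :=
      (convex_halfSpace_le ℓ.isLinear m).openSegment_subset (hle y hy) (hle z hz) hw
    rcases hwm.lt_or_eq with hlt | heq
    · exact Or.inl hlt
    · obtain ⟨hym, hzm⟩ := eq_of_mem_openSegment_of_le ℓ (hle y hy) (hle z hz) hw heq.ge
      have hyF : y ∈ F := hy.resolve_left (by simp [hym])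
      have hzF : z ∈ F := hz.resolve_left (by simp [hzm])
      exact Or.inr ((convex_convexHull ℝ _).openSegment_subset hyF hzF hw)
  have hVsub : V ⊆ {y | ℓ y < m} ∪ F := fun v hv =>
    (hV v hv).lt_or_eq.imp id fun h => subset_convexHull ℝ _ ⟨hv, h⟩
  exact (convexHull_min hVsub hconv hx).resolve_left (by simp [hxm])

lemma isExtreme_convexHull_setOf_eq (ℓ : E →ₗ[ℝ] ℝ) {V : Set E} {m : ℝ}
    (hV : ∀ v ∈ V, ℓ v ≤ m) : IsExtreme ℝ (convexHull ℝ V) (convexHull ℝ {v ∈ V | ℓ v = m}) := by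
  have hK : ∀ x ∈ convexHull ℝ V, ℓ x ≤ m :=
    fun x hx => convexHull_min hV (convex_halfSpace_le ℓ.isLinear m) hx
  convert isExtreme_setOf_eq ℓ hK using 1
  ext x
  refine ⟨fun hx => ⟨convexHull_mono (fun v hv => hv.1) hx, ?_⟩,
    fun hx => mem_convexHull_setOf_eq ℓ hV hx.1 hx.2⟩
  exact convexHull_min (fun v hv => hv.2) (convex_hyperplane ℓ.isLinear m) hx

lemma mem_extremePoints_convexHull_of_lt (ℓ : E →ₗ[ℝ] ℝ) {V : Set E} {p : E} (hp : p ∈ V)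
    (hlt : ∀ v ∈ V, v ≠ p → ℓ v < ℓ p) : p ∈ (convexHull ℝ V).extremePoints ℝ := by
  have hV : ∀ v ∈ V, ℓ v ≤ ℓ p := fun v hv =>
    (eq_or_ne v p).elim (fun h => h ▸ le_rfl) fun h => (hlt v hv h).le
  have hsingle : {v ∈ V | ℓ v = ℓ p} = {p} := by
    ext v
    refine ⟨fun hv => by_contra fun h => (hlt v hv.1 h).ne hv.2, ?_⟩
    rintro rfl
    exact ⟨hp, rfl⟩
  have := isExtreme_convexHull_setOf_eq ℓ hV
  rwa [hsingle, convexHull_singleton, isExtreme_singleton] at this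

lemma forall_lt_of_convex_of_ne (ℓ : E →ₗ[ℝ] ℝ) {C : Set E} (hC : Convex ℝ C) {m : ℝ}
    (hCm : ∀ x ∈ C, ℓ x ≠ m) {y : E} (hy : y ∈ C) (hym : m < ℓ y) : ∀ x ∈ C, m < ℓ x := by
  intro x hx
  by_contra! hxm
  have hI : (ℓ '' C).OrdConnected := (hC.linear_image ℓ).ordConnected
  obtain ⟨z, hz, hzm⟩ := hI.out ⟨x, hx, rfl⟩ ⟨y, hy, rfl⟩ ⟨hxm, hym.le⟩
  exact hCm z hz hzm

lemma IsExtreme.mem_segment_of_mem_affineSpan {K : Set E} {p q x : E}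
    (h : IsExtreme ℝ K (segment ℝ p q)) (hx : x ∈ K) (hxl : x ∈ line[ℝ, p, q]) :
    x ∈ segment ℝ p q := by
  obtain ⟨r, rfl⟩ := mem_affineSpan_pair_iff_exists_lineMap_eq.mp hxl
  have hp : p ∈ K := h.subset (left_mem_segment ℝ p q)
  have hq : q ∈ K := h.subset (right_mem_segment ℝ p q)
  rcases lt_or_ge r 0 with hr | hr
  · -- `p` lies strictly between `lineMap p q r` and `q`
    refine h.left_mem_of_mem_openSegment hx hq (left_mem_segment ℝ p q) ?_
    rw [openSegment_eq_image_lineMap]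
    refine ⟨-r / (1 - r), ⟨div_pos (by linarith) (by linarith), ?_⟩, ?_⟩
    · rw [div_lt_one (by linarith)]; linarith
    · simp only [lineMap_apply_module']
      have : (1 - r) ≠ 0 := by linarith
      match_scalars <;> field_simp <;> ring
  rcases le_or_gt r 1 with hr' | hr'
  · rw [segment_eq_image_lineMap]
    exact ⟨r, ⟨hr, hr'⟩, rfl⟩
  · refine h.right_mem_of_mem_openSegment hp hx (right_mem_segment ℝ p q) ?_
    rw [openSegment_eq_image_lineMap]
    refine ⟨1 / r, ⟨by positivity, by rw [div_lt_one (by linarith)]; linarith⟩, ?_⟩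
    simp only [lineMap_apply_module']
    have : r ≠ 0 := by linarith
    match_scalars <;> field_simp
    ring

lemma IsExtreme.forall_le_of_lt (ℓ : E →ₗ[ℝ] ℝ) {K F : Set E} {m : ℝ} (hK : Convex ℝ K)
    (hF : IsExtreme ℝ K F) (hFm : ∀ x ∈ F, ℓ x = m)
    (hKF : ∀ x ∈ K, ℓ x = m → x ∈ F) {w : E} (hw : w ∈ K) (hwm : ℓ w < m) :
    ∀ z ∈ K, ℓ z ≤ m := by
  intro z hz
  by_contra! hzm
  -- the segment from `w` to `z` crosses the level `m` at a point of `F`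
  set s := (m - ℓ w) / (ℓ z - ℓ w)
  have hs : s ∈ Set.Ioo (0 : ℝ) 1 :=
    ⟨div_pos (by linarith) (by linarith), (div_lt_one (by linarith)).mpr (by linarith)⟩
  have hA : lineMap w z s ∈ openSegment ℝ w z := by
    rw [openSegment_eq_image_lineMap]
    exact ⟨s, hs, rfl⟩
  have hAm : ℓ (lineMap w z s) = m := by
    rw [ℓ.apply_lineMap_eq, div_mul_cancel₀ _ (by linarith)]
    ring
  have hzF := hF.right_mem_of_mem_openSegment hw hz (hKF _ (hK.openSegment_subset hw hz hA) hAm) hA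
  exact hzm.ne' (hFm z hzF)

end Convex

def lin (u v : ℝ) : ℝ × ℝ →ₗ[ℝ] ℝ := u • LinearMap.fst ℝ ℝ ℝ + v • LinearMap.snd ℝ ℝ ℝ

@[simp] lemma lin_apply (u v : ℝ) (p : ℝ × ℝ) : lin u v p = u * p.1 + v * p.2 := by
  simp [lin]

lemma lin_mono {u v : ℝ} (hu : 0 ≤ u) (hv : 0 ≤ v) {p q : ℝ × ℝ} (h : p ≤ q) :
    lin u v p ≤ lin u v q := by
  simp only [lin_apply]
  gcongr
  exacts [h.1, h.2]

lemma lin_lt_lin {u v : ℝ} (hu : 0 < u) (hv : 0 < v) {p q : ℝ × ℝ} (h : p < q) :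
    lin u v p < lin u v q := by
  simp only [lin_apply]
  rcases Prod.lt_iff.mp h with ⟨h₁, h₂⟩ | ⟨h₁, h₂⟩
  · linarith [mul_lt_mul_of_pos_left h₁ hu, mul_le_mul_of_nonneg_left h₂ hv.le]
  · linarith [mul_le_mul_of_nonneg_left h₁ hu.le, mul_lt_mul_of_pos_left h₂ hv]

lemma lin_add_mul (a b gu gv ε : ℝ) (p : ℝ × ℝ) :
    lin (a + ε * gu) (b + ε * gv) p = lin a b p + ε * lin gu gv p := by
  simp only [lin_apply]; ring

lemma lin_sub_mul (u v t a b : ℝ) (p : ℝ × ℝ) :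
    lin (u - t * a) (v - t * b) p = lin u v p - t * lin a b p := by
  simp only [lin_apply]; ring

lemma le_of_fst_eq_of_lin_le {a b : ℝ} (hb : 0 < b) {p q : ℝ × ℝ} (h1 : p.1 = q.1)
    (h : lin a b p ≤ lin a b q) : p ≤ q := by
  simp only [lin_apply, h1] at h
  exact ⟨h1.le, le_of_mul_le_mul_left (by linarith) hb⟩

lemma exists_lineMap_fst_eq {p q : ℝ × ℝ} (hpq : p.1 ≠ q.1) (x : ℝ) :
    ∃ r : ℝ, (lineMap p q r : ℝ × ℝ).1 = x := by
  refine ⟨(x - p.1) / (q.1 - p.1), ?_⟩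
  rw [lineMap_apply_module]
  simp only [Prod.fst_add, Prod.smul_fst, smul_eq_mul]
  field_simp [sub_ne_zero.mpr hpq.symm]
  ring

lemma mem_affineSpan_pair_of_lin_eq {a b m : ℝ} (hb : b ≠ 0) {p q x : ℝ × ℝ} (hpq : p ≠ q)
    (hp : lin a b p = m) (hq : lin a b q = m) (hx : lin a b x = m) : x ∈ line[ℝ, p, q] := by
  have h1 : p.1 ≠ q.1 := by
    intro h1
    simp only [lin_apply, h1] at hp
    simp only [lin_apply] at hq
    exact hpq (Prod.ext h1 (mul_left_cancel₀ hb (by linarith)))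
  obtain ⟨r, hr⟩ := exists_lineMap_fst_eq h1 x.1
  refine mem_affineSpan_pair_iff_exists_lineMap_eq.mpr ⟨r, Prod.ext hr ?_⟩
  have hlin := (lin a b).apply_lineMap_eq p q r
  simp only [lin_apply, hp, hq, hr] at hlin hx
  exact mul_left_cancel₀ hb (by linarith)

lemma exists_lin_eq_one_eq_zero {a b : ℝ} {p q : ℝ × ℝ} (hpq : p ≠ q) (hp : lin a b p = 1)
    (hq : lin a b q = 1) : ∃ u v, lin u v p = 1 ∧ lin u v q = 0 := by
  simp only [lin_apply] at hp hq ⊢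
  have hD : p.1 * q.2 - q.1 * p.2 ≠ 0 := by
    intro hD
    -- a vanishing determinant would make `q` a multiple of `p`, hence `q = p` on this line
    refine hpq (Prod.ext ?_ ?_)
    · linear_combination q.1 * hp - p.1 * hq + b * hD
    · linear_combination q.2 * hp - p.2 * hq - a * hD
  refine ⟨q.2 / (p.1 * q.2 - q.1 * p.2), -q.1 / (p.1 * q.2 - q.1 * p.2), ?_, ?_⟩
  · rw [div_mul_eq_mul_div, div_mul_eq_mul_div, ← add_div, div_eq_one_iff_eq hD]
    ring
  · rw [div_mul_eq_mul_div, div_mul_eq_mul_div, ← add_div, div_eq_zero_iff]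
    exact Or.inl (by ring)

lemma lin_lt_one_of_mem_segment {u v : ℝ} {p q z : ℝ × ℝ} (hp : lin u v p = 1)
    (hq : lin u v q = 0) (hz : z ∈ segment ℝ p q) (hzp : z ≠ p) : lin u v z < 1 := by
  rw [segment_eq_image_lineMap] at hz
  obtain ⟨r, ⟨hr0, -⟩, rfl⟩ := hz
  rcases hr0.lt_or_eq with hr | rfl
  · rw [(lin u v).apply_lineMap_eq, hp, hq]
    linarith
  · exact absurd (lineMap_apply_zero p q) hzp

lemma exists_pos_lin_eq_one {p q : ℝ × ℝ} (hq₁ : 0 < q.1) (hp₂ : 0 < p.2) (h₁ : q.1 < p.1)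
    (h₂ : p.2 < q.2) : ∃ a b, 0 < a ∧ 0 < b ∧ lin a b p = 1 ∧ lin a b q = 1 := by
  have hD : 0 < p.1 * q.2 - q.1 * p.2 := by nlinarith
  refine ⟨(q.2 - p.2) / (p.1 * q.2 - q.1 * p.2), (p.1 - q.1) / (p.1 * q.2 - q.1 * p.2),
    div_pos (by linarith) hD, div_pos (by linarith) hD, ?_, ?_⟩ <;>
  · rw [lin_apply, div_mul_eq_mul_div, div_mul_eq_mul_div, ← add_div, div_eq_one_iff_eq hD.ne']
    ring

lemma lin_le_max_of_le_lin {a b u v : ℝ} (hb : 0 < b) (hu : 0 ≤ u) (hv : 0 ≤ v)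
    {p q x : ℝ × ℝ} (hpx : p.1 ≤ x.1) (hxq : x.1 ≤ q.1) (hpq : p.1 < q.1)
    (hp : lin a b x ≤ lin a b p) (hq : lin a b x ≤ lin a b q) :
    lin u v x ≤ max (lin u v p) (lin u v q) := by
  obtain ⟨r, hr⟩ := exists_lineMap_fst_eq hpq.ne x.1
  have hr' : r * (q.1 - p.1) + p.1 = x.1 := by simpa [lineMap_apply_module'] using hr
  have hr0 : 0 ≤ r := by nlinarith
  have hr1 : r ≤ 1 := by nlinarith
  have hxP : x ≤ lineMap p q r := by
    refine le_of_fst_eq_of_lin_le (a := a) hb hr.symm ?_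
    rw [(lin a b).apply_lineMap_eq]
    nlinarith [mul_le_mul_of_nonneg_left hq hr0, mul_le_mul_of_nonneg_left hp (sub_nonneg.2 hr1)]
  have hP := (lin_mono hu hv hxP).trans_eq ((lin u v).apply_lineMap_eq p q r)
  nlinarith [le_max_left (lin u v p) (lin u v q), le_max_right (lin u v p) (lin u v q)]

lemma eventually_add_mul_lt {κ m : ℝ} (h : κ < m) (ρ : ℝ) :
    ∀ᶠ ε in 𝓝 (0 : ℝ), κ + ε * ρ < m :=
  (by fun_prop : ContinuousAt (fun ε : ℝ => κ + ε * ρ) 0).eventually_lt continuousAt_const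
    (by simpa using h)

lemma eventually_lt_add_mul {κ m : ℝ} (h : m < κ) (ρ : ℝ) :
    ∀ᶠ ε in 𝓝 (0 : ℝ), m < κ + ε * ρ :=
  continuousAt_const.eventually_lt (by fun_prop : ContinuousAt (fun ε : ℝ => κ + ε * ρ) 0)
    (by simpa using h)

lemma toR2_add (c d : ℕ × ℕ) : toR2 (c + d) = toR2 c + toR2 d := by
  simp [toR2]

lemma toR2_mono {c d : ℕ × ℕ} (h : c ≤ d) : toR2 c ≤ toR2 d :=
  ⟨Nat.cast_le.mpr h.1, Nat.cast_le.mpr h.2⟩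

lemma toR2_injective : Function.Injective toR2 := by
  intro c d h
  simp only [toR2, Prod.mk.injEq, Nat.cast_inj] at h
  exact Prod.ext h.1 h.2

lemma exists_pos_lin_eq_one_of_not_le {c₁ c₂ : ℕ × ℕ} (hc₁ : c₁ ∈ posQuad) (hc₂ : c₂ ∈ posQuad)
    (h₁₂ : ¬ c₁ ≤ c₂) (h₂₁ : ¬ c₂ ≤ c₁) :
    ∃ a b, 0 < a ∧ 0 < b ∧ lin a b (toR2 c₁) = 1 ∧ lin a b (toR2 c₂) = 1 := by
  have pos : ∀ {n : ℕ}, 1 ≤ n → (0 : ℝ) < n := Nat.cast_pos.mpr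
  have cast : ∀ {m n : ℕ}, m < n → (m : ℝ) < n := Nat.cast_lt.mpr
  simp only [Prod.le_def, not_and_or, not_le] at h₁₂ h₂₁
  rcases lt_or_gt_of_ne (show c₁.1 ≠ c₂.1 by omega) with hx | hx
  · obtain ⟨a, b, ha, hb, h₂, h₁⟩ := exists_pos_lin_eq_one (p := toR2 c₂) (q := toR2 c₁)
      (pos hc₁.1) (pos hc₂.2) (cast hx) (cast (by omega))
    exact ⟨a, b, ha, hb, h₁, h₂⟩
  · exact exists_pos_lin_eq_one (pos hc₂.1) (pos hc₁.2) (cast hx) (cast (by omega))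

lemma Set.Finite.exists_notMem_mem_affineSpan_pair {S : Set (ℕ × ℕ)} (hS : S.Finite)
    {c₁ c₂ : ℕ × ℕ}
    (hc₂ : c₂ ∈ posQuad) (hle : c₁ ≤ c₂) (hne : c₁ ≠ c₂) :
    ∃ w ∈ posQuad, w ∉ S ∧ toR2 w ∈ line[ℝ, toR2 c₁, toR2 c₂] := by
  obtain ⟨δ, rfl⟩ := exists_add_of_le hle
  -- the lattice points `c₁ + (k + 1) • δ` on the ray beyond `c₂` eventually leave `S`
  have hδ : δ ≠ 0 := by rintro rfl; exact hne (add_zero c₁).symm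
  set f : ℕ → ℕ × ℕ := fun k => c₁ + (k + 1) • δ
  have hf : Function.Injective f := fun k l hkl => by
    have h₁ := congrArg Prod.fst hkl
    have h₂ := congrArg Prod.snd hkl
    simp only [f, Prod.fst_add, Prod.snd_add, Prod.smul_fst, Prod.smul_snd, smul_eq_mul,
      add_right_inj, mul_eq_mul_right_iff, add_left_inj] at h₁ h₂
    rcases h₁ with h₁ | h₁
    · exact h₁
    · exact h₂.resolve_right fun h₂ => hδ (Prod.ext h₁ h₂)
  obtain ⟨k, hk⟩ := (hS.preimage hf.injOn).exists_notMem
  refine ⟨f k, ?_, hk, mem_affineSpan_pair_iff_exists_lineMap_eq.mpr ⟨k + 1, ?_⟩⟩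
  · simp only [posQuad, f, Set.mem_ofPred_eq, Prod.fst_add, Prod.snd_add, Prod.smul_fst,
      Prod.smul_snd, smul_eq_mul] at hc₂ ⊢
    constructor <;> nlinarith
  · ext <;> simp [f, toR2, lineMap_apply_module'] <;> ring

lemma Set.Finite.exists_finite_le_of_mem_posQuad_diff {S : Set (ℕ × ℕ)} (hS : S.Finite) :
    ∃ F : Set (ℕ × ℕ), F.Finite ∧ F ⊆ posQuad \ S ∧ ∀ d ∈ posQuad \ S, ∃ e ∈ F, e ≤ d := by
  obtain ⟨B, hB⟩ := hS.bddAbove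
  set M : ℕ × ℕ := (B.1 + 1, B.2 + 1)
  refine ⟨(posQuad \ S) ∩ Set.Iic M, (Set.finite_Iic M).inter_of_right _, fun _ h => h.1, ?_⟩
  rintro d ⟨hd, hdS⟩
  -- `d ⊓ M` stays outside `S`: a coordinate that got clipped is beyond the bound `B` of `S`
  refine ⟨d ⊓ M, ⟨⟨?_, fun hS' => hdS ?_⟩, Set.mem_Iic.mpr inf_le_right⟩, inf_le_left⟩
  · exact ⟨le_min hd.1 (Nat.le_add_left 1 _), le_min hd.2 (Nat.le_add_left 1 _)⟩
  · have hle := hB hS'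
    have : d ⊓ M = d := by
      simp only [Prod.le_def, Prod.fst_inf, Prod.snd_inf, M] at hle ⊢
      ext <;> simp <;> omega
    rwa [this] at hS'

def cut (u v : ℝ) : Set (ℕ × ℕ) := {c | c ∈ posQuad ∧ lin u v (toR2 c) ≤ 1}

structure IsCutBy (S : Set (ℕ × ℕ)) (u v : ℝ) : Prop where
  pos_fst : 0 < u
  pos_snd : 0 < v
  eq_cut : S = cut u v

lemma isTriangularSet_iff {S : Set (ℕ × ℕ)} : IsTriangularSet S ↔ ∃ u v, IsCutBy S u v := by
  have key : ∀ r s : ℝ, {c : ℕ × ℕ | 1 ≤ c.1 ∧ 1 ≤ c.2 ∧ (c.1 : ℝ) / r + (c.2 : ℝ) / s ≤ 1} =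
      cut r⁻¹ s⁻¹ := by
    intro r s
    ext c
    simp [cut, posQuad, toR2, div_eq_inv_mul, and_assoc]
  constructor
  · rintro ⟨r, s, hr, hs, rfl⟩
    exact ⟨r⁻¹, s⁻¹, inv_pos.mpr hr, inv_pos.mpr hs, key r s⟩
  · rintro ⟨u, v, ⟨hu, hv, rfl⟩⟩
    refine ⟨u⁻¹, v⁻¹, inv_pos.mpr hu, inv_pos.mpr hv, ?_⟩
    rw [key, inv_inv, inv_inv]

namespace IsCutBy

variable {S : Set (ℕ × ℕ)} {u v : ℝ}

lemma subset_posQuad (h : IsCutBy S u v) : S ⊆ posQuad := by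
  rw [h.eq_cut]
  exact fun c hc => hc.1

lemma lin_le (h : IsCutBy S u v) {c : ℕ × ℕ} (hc : c ∈ S) : lin u v (toR2 c) ≤ 1 := by
  rw [h.eq_cut] at hc
  exact hc.2

lemma one_lt_lin (h : IsCutBy S u v) {c : ℕ × ℕ} (hc : c ∈ posQuad) (hcS : c ∉ S) :
    1 < lin u v (toR2 c) := by
  rw [h.eq_cut] at hcS
  exact not_le.mp fun hle => hcS ⟨hc, hle⟩

lemma of_forall (hu : 0 < u) (hv : 0 < v) (hsub : S ⊆ posQuad)
    (hle : ∀ c ∈ S, lin u v (toR2 c) ≤ 1) (hgt : ∀ c ∈ posQuad, c ∉ S → 1 < lin u v (toR2 c)) :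
    IsCutBy S u v := by
  refine ⟨hu, hv, Set.ext fun c => ⟨fun hc => ⟨hsub hc, hle c hc⟩, fun hc => ?_⟩⟩
  by_contra hcS
  exact (hgt c hc.1 hcS).not_ge hc.2

lemma finite (h : IsCutBy S u v) : S.Finite := by
  refine (Set.finite_Iic (⌊u⁻¹⌋₊, ⌊v⁻¹⌋₊)).subset fun c hc => ?_
  have hlin := h.lin_le hc
  have hpos := h.subset_posQuad hc
  simp only [lin_apply, toR2] at hlin
  have h1 : (1 : ℝ) ≤ c.1 := by exact_mod_cast hpos.1
  have h2 : (1 : ℝ) ≤ c.2 := by exact_mod_cast hpos.2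
  have hu := h.pos_fst
  have hv := h.pos_snd
  refine ⟨Nat.le_floor ?_, Nat.le_floor ?_⟩
  · rw [inv_eq_one_div, le_div_iff₀ hu]
    nlinarith
  · rw [inv_eq_one_div, le_div_iff₀ hv]
    nlinarith

lemma mem_of_le (h : IsCutBy S u v) {c d : ℕ × ℕ}
    (hc : c ∈ S) (hd : d ∈ posQuad) (hdc : d ≤ c) : d ∈ S := by
  rw [h.eq_cut] at hc ⊢
  exact ⟨hd, (lin_mono h.pos_fst.le h.pos_snd.le (toR2_mono hdc)).trans hc.2⟩

lemma exists_one_lt_lin (h : IsCutBy S u v) {a b : ℝ} (ha : 0 < a) (hb : 0 ≤ b) :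
    ∃ w ∈ posQuad, w ∉ S ∧ 1 < lin a b (toR2 w) := by
  obtain ⟨M, hM⟩ := exists_nat_gt (max (1 / a) (1 / u))
  have hM₁ : 0 < M := Nat.cast_pos.mp ((by positivity : (0 : ℝ) < 1 / a).trans
    ((le_max_left _ _).trans_lt hM))
  have key : ∀ {x y : ℝ}, 0 < x → 1 / x < M → 0 ≤ y → 1 < lin x y (toR2 (M, M)) := by
    intro x y hx hxM hy
    simp only [lin_apply, toR2]
    nlinarith [(div_lt_iff₀' hx).mp hxM, mul_nonneg hy (Nat.cast_nonneg M)]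
  refine ⟨(M, M), ⟨hM₁, hM₁⟩, fun hw => ?_, key ha ((le_max_left _ _).trans_lt hM) hb⟩
  exact (key h.pos_fst ((le_max_right _ _).trans_lt hM) h.pos_snd.le).not_ge (h.lin_le hw)

lemma removableCell_of_tilt {a b : ℝ} (h : IsCutBy S a b)
    {c : ℕ × ℕ} (hc : c ∈ S) (hc1 : lin a b (toR2 c) = 1) {gu gv : ℝ}
    (hgc : 0 < lin gu gv (toR2 c))
    (hg : ∀ z ∈ S, z ≠ c → lin a b (toR2 z) = 1 → lin gu gv (toR2 z) ≤ 0) :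
    RemovableCell S c := by
  obtain ⟨F, hF, hFS, hFle⟩ := h.finite.exists_finite_le_of_mem_posQuad_diff
  set S₁ := {z ∈ S | lin a b (toR2 z) < 1}
  have hS₁ : S₁.Finite := h.finite.subset fun z hz => hz.1
  have hS₁ε : ∀ᶠ ε in 𝓝 (0 : ℝ), ∀ z ∈ S₁, lin a b (toR2 z) + ε * lin gu gv (toR2 z) < 1 :=
    (eventually_all_finite hS₁).mpr fun z hz => eventually_add_mul_lt hz.2 _
  have hFε : ∀ᶠ ε in 𝓝 (0 : ℝ), ∀ d ∈ F, 1 < lin a b (toR2 d) + ε * lin gu gv (toR2 d) :=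
    (eventually_all_finite hF).mpr fun d hd =>
      eventually_lt_add_mul (h.one_lt_lin (hFS hd).1 (hFS hd).2) _
  have hev := (eventually_mem_nhdsWithin (a := (0 : ℝ)) (s := Set.Ioi 0)).and
    (Eventually.filter_mono nhdsWithin_le_nhds ((eventually_lt_add_mul h.pos_fst gu).and
      ((eventually_lt_add_mul h.pos_snd gv).and (hS₁ε.and hFε))))
  obtain ⟨ε, hε, hu, hv, hS₁ε, hFε⟩ := hev.exists
  have hε : 0 < ε := hε
  refine ⟨hc, isTriangularSet_iff.mpr ⟨_, _, IsCutBy.of_forall hu hv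
    (sdiff_subset.trans h.subset_posQuad) (fun z hz => ?_) (fun d hd hdS => ?_)⟩⟩
  · rw [lin_add_mul]
    rcases (h.lin_le hz.1).lt_or_eq with hlt | heq
    · exact (hS₁ε z ⟨hz.1, hlt⟩).le
    · have := hg z hz.1 hz.2 heq
      rw [heq]
      linarith [mul_nonpos_of_nonneg_of_nonpos hε.le this]
  · rw [lin_add_mul]
    by_cases hdc : d = c
    · subst hdc
      rw [hc1]
      linarith [mul_pos hε hgc]
    · have hdS' : d ∉ S := fun hdS' => hdS ⟨hdS', hdc⟩
      obtain ⟨e, he, hed⟩ := hFle d ⟨hd, hdS'⟩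
      calc 1 < lin a b (toR2 e) + ε * lin gu gv (toR2 e) := hFε e he
        _ ≤ lin a b (toR2 d) + ε * lin gu gv (toR2 d) := by
          simpa only [lin_add_mul] using lin_mono hu.le hv.le (toR2_mono hed)

lemma one_lt_lin_self (h : IsCutBy (S \ {c}) u v) (hc : c ∈ posQuad) : 1 < lin u v (toR2 c) :=
  h.one_lt_lin hc fun h => h.2 rfl

lemma not_le_of_mem (h : IsCutBy (S \ {c}) u v) (hc : c ∈ posQuad) {d : ℕ × ℕ} (hd : d ∈ S)
    (hdc : d ≠ c) : ¬ c ≤ d := fun hle =>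
  (h.lin_le ⟨hd, hdc⟩).not_gt
    ((h.one_lt_lin_self hc).trans_le (lin_mono h.pos_fst.le h.pos_snd.le (toR2_mono hle)))

lemma not_le_chord (h : IsCutBy (S \ {c}) u v) (hc : c ∈ posQuad) {a b : ℝ} (hb : 0 < b)
    {p q : ℕ × ℕ} (hp : p ∈ S) (hq : q ∈ S) (hpc : p ≠ c) (hqc : q ≠ c) (hpx : p.1 ≤ c.1)
    (hxq : c.1 ≤ q.1) (hpq : p.1 < q.1) :
    ¬ (lin a b (toR2 c) ≤ lin a b (toR2 p) ∧ lin a b (toR2 c) ≤ lin a b (toR2 q)) := by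
  rintro ⟨hcp, hcq⟩
  have := lin_le_max_of_le_lin hb h.pos_fst.le h.pos_snd.le
    (show (p.1 : ℝ) ≤ c.1 by exact_mod_cast hpx) (show (c.1 : ℝ) ≤ q.1 by exact_mod_cast hxq)
    (show (p.1 : ℝ) < q.1 by exact_mod_cast hpq) hcp hcq
  have := max_le (h.lin_le ⟨hp, hpc⟩) (h.lin_le ⟨hq, hqc⟩)
  linarith [h.one_lt_lin_self hc]

lemma lin_le_of_add_eq (h : IsCutBy (S \ {c}) u v) (hc : c ∈ posQuad) (ℓ : ℝ × ℝ →ₗ[ℝ] ℝ)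
    {d e : ℕ × ℕ} (hd : d ∈ S) (hdc : d ≠ c) (hmax : ∀ z ∈ S, ℓ (toR2 z) ≤ ℓ (toR2 d))
    (he : e ∈ posQuad) (hedc : e + c = d + d) : ℓ (toR2 d) ≤ ℓ (toR2 c) := by
  have hsum : ∀ g : ℝ × ℝ →ₗ[ℝ] ℝ, g (toR2 e) + g (toR2 c) = g (toR2 d) + g (toR2 d) := by
    intro g
    rw [← map_add, ← map_add, ← toR2_add, ← toR2_add, hedc]
  -- the cut of `c` takes the value `2 lin u v d - lin u v c < 1` at `e = 2d - c`, so keeps `e`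
  have heS : e ∈ S := by
    by_contra heS
    linarith [h.one_lt_lin he fun h => heS h.1, hsum (lin u v), h.lin_le ⟨hd, hdc⟩,
      h.one_lt_lin_self hc]
  linarith [hmax e heS, hsum ℓ]

end IsCutBy

lemma RemovableCell.mem_extremePoints {S : Set (ℕ × ℕ)} {c : ℕ × ℕ} (hr : RemovableCell S c)
    (hc : c ∈ posQuad) : toR2 c ∈ (convexHull ℝ (toR2 '' S)).extremePoints ℝ := by
  obtain ⟨hcS, u, v, hcut⟩ := hr.imp_right isTriangularSet_iff.mp
  refine mem_extremePoints_convexHull_of_lt (lin u v) ⟨c, hcS, rfl⟩ ?_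
  rintro _ ⟨z, hz, rfl⟩ hzc
  exact (hcut.lin_le ⟨hz, fun h => hzc (congrArg toR2 h)⟩).trans_lt
    (hcut.one_lt_lin_self hc)

structure IsEdgeCut (S : Set (ℕ × ℕ)) (c₁ c₂ : ℕ × ℕ) (a b : ℝ) : Prop
    extends IsCutBy S a b where
  left_mem : c₁ ∈ S
  right_mem : c₂ ∈ S
  lin_left : lin a b (toR2 c₁) = 1
  lin_right : lin a b (toR2 c₂) = 1
  mem_segment : ∀ z ∈ S, lin a b (toR2 z) = 1 → toR2 z ∈ segment ℝ (toR2 c₁) (toR2 c₂)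

namespace IsEdgeCut

variable {S : Set (ℕ × ℕ)} {c₁ c₂ : ℕ × ℕ} {a b : ℝ}

lemma symm (h : IsEdgeCut S c₁ c₂ a b) : IsEdgeCut S c₂ c₁ a b where
  toIsCutBy := h.toIsCutBy
  left_mem := h.right_mem
  right_mem := h.left_mem
  lin_left := h.lin_right
  lin_right := h.lin_left
  mem_segment z hz hz1 := segment_symm ℝ (toR2 c₁) (toR2 c₂) ▸ h.mem_segment z hz hz1

lemma removableCell_left (h : IsEdgeCut S c₁ c₂ a b) (hne : c₁ ≠ c₂) : RemovableCell S c₁ := by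
  obtain ⟨u, v, hu, hv⟩ :=
    exists_lin_eq_one_eq_zero (toR2_injective.ne hne) h.lin_left h.lin_right
  set T := {z ∈ S | z ≠ c₁ ∧ lin a b (toR2 z) = 1}
  have hT : ∀ z ∈ T, lin u v (toR2 z) < 1 := fun z hz =>
    lin_lt_one_of_mem_segment hu hv (h.mem_segment z hz.1 hz.2.2) (toR2_injective.ne hz.2.1)
  obtain ⟨z₀, hz₀, hmax⟩ := Set.exists_max_image T (fun z => lin u v (toR2 z))
    (h.finite.subset fun z hz => hz.1) ⟨c₂, h.right_mem, hne.symm, h.lin_right⟩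
  set t := lin u v (toR2 z₀)
  -- the tilt `lin u v - t • lin a b` is positive at `c₁` and nonpositive on the rest of `T`
  refine h.removableCell_of_tilt h.left_mem h.lin_left (gu := u - t * a) (gv := v - t * b)
    ?_ fun z hz hzc hz1 => ?_
  · rw [lin_sub_mul, hu, h.lin_left]
    linarith [hT z₀ hz₀]
  · rw [lin_sub_mul, hz1]
    linarith [hmax z ⟨hz, hzc, hz1⟩]

lemma isExtreme_segment (h : IsEdgeCut S c₁ c₂ a b) :
    IsExtreme ℝ (convexHull ℝ (toR2 '' S)) (segment ℝ (toR2 c₁) (toR2 c₂)) := by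
  have hV : ∀ x ∈ toR2 '' S, lin a b x ≤ 1 := by
    rintro _ ⟨z, hz, rfl⟩
    exact h.lin_le hz
  have hseg : convexHull ℝ {x ∈ toR2 '' S | lin a b x = 1} = segment ℝ (toR2 c₁) (toR2 c₂) := by
    refine le_antisymm (convexHull_min ?_ (convex_segment _ _)) ?_
    · rintro _ ⟨⟨z, hz, rfl⟩, hz1⟩
      exact h.mem_segment z hz hz1
    · rw [← convexHull_pair]
      exact convexHull_mono (Set.pair_subset ⟨⟨c₁, h.left_mem, rfl⟩, h.lin_left⟩
        ⟨⟨c₂, h.right_mem, rfl⟩, h.lin_right⟩)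
  exact hseg ▸ isExtreme_convexHull_setOf_eq (lin a b) hV

lemma consecutiveVertices (h : IsEdgeCut S c₁ c₂ a b) (hne : c₁ ≠ c₂) :
    ConsecutiveVertices (convexHull ℝ (toR2 '' S)) (toR2 c₁) (toR2 c₂) :=
  ⟨toR2_injective.ne hne,
    (h.removableCell_left hne).mem_extremePoints (h.subset_posQuad h.left_mem),
    (h.symm.removableCell_left hne.symm).mem_extremePoints (h.subset_posQuad h.right_mem),
    h.isExtreme_segment⟩

lemma affineSpan_inter_convexHull_eq_empty (h : IsEdgeCut S c₁ c₂ a b) :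
    (affineSpan ℝ {toR2 c₁, toR2 c₂} : Set (ℝ × ℝ)) ∩
      convexHull ℝ (toR2 '' (posQuad \ S)) = ∅ := by
  refine Set.eq_empty_iff_forall_notMem.mpr fun x ⟨hxl, hxE⟩ => ?_
  have hx1 := (lin a b).eq_of_mem_affineSpan_pair h.lin_left h.lin_right hxl
  have hE : toR2 '' (posQuad \ S) ⊆ {y | 1 < lin a b y} := by
    rintro _ ⟨d, hd, rfl⟩
    exact h.one_lt_lin hd.1 hd.2
  exact (convexHull_min hE (convex_halfSpace_gt (lin a b).isLinear 1) hxE).ne' hx1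

end IsEdgeCut

lemma IsCutBy.one_lt_lin_of_forall_ne {S : Set (ℕ × ℕ)} {α β a b : ℝ} (hS : IsCutBy S α β)
    (ha : 0 < a) (hb : 0 < b) (hne : ∀ x ∈ convexHull ℝ (toR2 '' (posQuad \ S)), lin a b x ≠ 1)
    {d : ℕ × ℕ} (hd : d ∈ posQuad) (hdS : d ∉ S) : 1 < lin a b (toR2 d) := by
  obtain ⟨w, hw, hwS, hw1⟩ := hS.exists_one_lt_lin ha hb.le
  exact forall_lt_of_convex_of_ne (lin a b) (convex_convexHull ℝ _) hne
    (subset_convexHull ℝ _ ⟨w, ⟨hw, hwS⟩, rfl⟩) hw1 _ (subset_convexHull ℝ _ ⟨d, ⟨hd, hdS⟩, rfl⟩)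

lemma IsCutBy.lin_le_of_isExtreme_segment {S : Set (ℕ × ℕ)} {α β a b : ℝ} (hS : IsCutBy S α β)
    {c₁ c₂ : ℕ × ℕ} (hc₁ : c₁ ∈ S) (hc₂ : c₂ ∈ S) (hne : c₁ ≠ c₂) (ha : 0 < a) (hb : 0 < b)
    (hl₁ : lin a b (toR2 c₁) = 1) (hl₂ : lin a b (toR2 c₂) = 1)
    (hface : IsExtreme ℝ (convexHull ℝ (toR2 '' S)) (segment ℝ (toR2 c₁) (toR2 c₂)))
    {z : ℕ × ℕ} (hz : z ∈ S) : lin a b (toR2 z) ≤ 1 := by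
  have hcorner : ∀ c ∈ S, ((1, 1) : ℕ × ℕ) ≤ c := fun c hc => hS.subset_posQuad hc
  have h₁₁ : ((1, 1) : ℕ × ℕ) ∈ S := hS.mem_of_le hc₁ ⟨le_rfl, le_rfl⟩ (hcorner c₁ hc₁)
  have h₁₁lt : lin a b (toR2 (1, 1)) < 1 := by
    have hlt : ∀ c ∈ S, (1, 1) ≠ c → lin a b (toR2 (1, 1)) < lin a b (toR2 c) := fun c hc h =>
      lin_lt_lin ha hb ((toR2_mono (hcorner c hc)).lt_of_ne (toR2_injective.ne h))
    by_cases h : ((1, 1) : ℕ × ℕ) = c₁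
    · exact hl₂ ▸ hlt c₂ hc₂ (h ▸ hne)
    · exact hl₁ ▸ hlt c₁ hc₁ h
  have hpair : ({toR2 c₁, toR2 c₂} : Set (ℝ × ℝ)) ⊆ {x | lin a b x = 1} := Set.pair_subset hl₁ hl₂
  refine hface.forall_le_of_lt (lin a b) (convex_convexHull ℝ _)
    (fun x hx => convexHull_min hpair (convex_hyperplane (lin a b).isLinear 1)
      (by rwa [convexHull_pair]))
    (fun x hx hx1 => hface.mem_segment_of_mem_affineSpan hx
      (mem_affineSpan_pair_of_lin_eq hb.ne' (toR2_injective.ne hne) hl₁ hl₂ hx1))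
    (subset_convexHull ℝ _ ⟨_, h₁₁, rfl⟩) h₁₁lt _ (subset_convexHull ℝ _ ⟨z, hz, rfl⟩)

lemma exists_isEdgeCut_of_consecutiveVertices {S : Set (ℕ × ℕ)} {α β : ℝ} (hS : IsCutBy S α β)
    {c₁ c₂ : ℕ × ℕ} (hc₁ : c₁ ∈ S) (hc₂ : c₂ ∈ S)
    (hcv : ConsecutiveVertices (convexHull ℝ (toR2 '' S)) (toR2 c₁) (toR2 c₂))
    (hdisj : (affineSpan ℝ {toR2 c₁, toR2 c₂} : Set (ℝ × ℝ)) ∩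
      convexHull ℝ (toR2 '' (posQuad \ S)) = ∅) :
    ∃ a b, IsEdgeCut S c₁ c₂ a b := by
  obtain ⟨hne, -, -, hface⟩ := hcv
  have hne' : c₁ ≠ c₂ := toR2_injective.ne_iff.mp hne
  have hq₁ := hS.subset_posQuad hc₁
  have hq₂ := hS.subset_posQuad hc₂
  have hnot : ∀ x ∈ line[ℝ, toR2 c₁, toR2 c₂], x ∉ convexHull ℝ (toR2 '' (posQuad \ S)) :=
    fun x hxl hxE => (Set.eq_empty_iff_forall_notMem.mp hdisj) x ⟨hxl, hxE⟩
  have h₁₂ : ¬ c₁ ≤ c₂ := fun hle => by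
    obtain ⟨w, hw, hwS, hwl⟩ := hS.finite.exists_notMem_mem_affineSpan_pair hq₂ hle hne'
    exact hnot _ hwl (subset_convexHull ℝ _ ⟨w, ⟨hw, hwS⟩, rfl⟩)
  have h₂₁ : ¬ c₂ ≤ c₁ := fun hle => by
    obtain ⟨w, hw, hwS, hwl⟩ := hS.finite.exists_notMem_mem_affineSpan_pair hq₁ hle hne'.symm
    exact hnot _ (by rwa [Set.pair_comm]) (subset_convexHull ℝ _ ⟨w, ⟨hw, hwS⟩, rfl⟩)
  obtain ⟨a, b, ha, hb, hl₁, hl₂⟩ := exists_pos_lin_eq_one_of_not_le hq₁ hq₂ h₁₂ h₂₁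
  have hline : ∀ x, lin a b x = 1 → x ∈ line[ℝ, toR2 c₁, toR2 c₂] := fun x hx =>
    mem_affineSpan_pair_of_lin_eq hb.ne' hne hl₁ hl₂ hx
  refine ⟨a, b, ⟨IsCutBy.of_forall ha hb hS.subset_posQuad
    (fun z hz => hS.lin_le_of_isExtreme_segment hc₁ hc₂ hne' ha hb hl₁ hl₂ hface hz)
    (fun d hd hdS => hS.one_lt_lin_of_forall_ne ha hb
      (fun x hx hx1 => hnot x (hline x hx1) hx) hd hdS), hc₁, hc₂, hl₁, hl₂,
    fun z hz hz1 => hface.mem_segment_of_mem_affineSpan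
      (subset_convexHull ℝ _ ⟨z, hz, rfl⟩) (hline _ hz1)⟩⟩

section TwoRemovableCells

variable {S : Set (ℕ × ℕ)} {α β u₁ v₁ u₂ v₂ a b : ℝ} {c₁ c₂ : ℕ × ℕ}

lemma one_lt_lin_of_removable (hS : IsCutBy S α β) (h₁ : IsCutBy (S \ {c₁}) u₁ v₁)
    (h₂ : IsCutBy (S \ {c₂}) u₂ v₂) (hc₁ : c₁ ∈ S) (hc₂ : c₂ ∈ S) (hne : c₁ ≠ c₂) (hb : 0 < b)
    (hl₁ : lin a b (toR2 c₁) = 1) (hl₂ : lin a b (toR2 c₂) = 1) (hx : c₁.1 ≠ c₂.1)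
    {d : ℕ × ℕ} (hd : d ∈ posQuad) (hdS : d ∉ S) : 1 < lin a b (toR2 d) := by
  by_contra! hle
  obtain ⟨r, hr⟩ := exists_lineMap_fst_eq (p := toR2 c₁) (q := toR2 c₂)
    (by simpa [toR2] using hx) (toR2 d).1
  have hdP : toR2 d ≤ lineMap (toR2 c₁) (toR2 c₂) r := by
    refine le_of_fst_eq_of_lin_le (a := a) hb hr.symm ?_
    rw [(lin a b).apply_lineMap_eq, hl₁, hl₂]
    linarith
  -- a cut line passing below `d` also passes below the point of the line above `d`
  have key : ∀ {T : Set (ℕ × ℕ)} {u v : ℝ}, IsCutBy T u v → d ∉ T →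
      1 < lin u v (toR2 c₁) + r * (lin u v (toR2 c₂) - lin u v (toR2 c₁)) := fun hT hdT =>
    (hT.one_lt_lin hd hdT).trans_le
      ((lin_mono hT.pos_fst.le hT.pos_snd.le hdP).trans_eq ((lin _ _).apply_lineMap_eq _ _ _))
  rcases le_or_gt r 0 with hr0 | hr0
  · have := key h₂ fun h => hdS h.1
    have := h₂.lin_le ⟨hc₁, hne⟩
    have := h₂.one_lt_lin_self (hS.subset_posQuad hc₂)
    nlinarith
  rcases le_or_gt r 1 with hr1 | hr1
  · have := key hS hdS
    have := hS.lin_le hc₁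
    have := hS.lin_le hc₂
    nlinarith
  · have := key h₁ fun h => hdS h.1
    have := h₁.lin_le ⟨hc₂, hne.symm⟩
    have := h₁.one_lt_lin_self (hS.subset_posQuad hc₁)
    nlinarith

lemma mem_segment_of_removable (hS : IsCutBy S α β) (h₁ : IsCutBy (S \ {c₁}) u₁ v₁)
    (h₂ : IsCutBy (S \ {c₂}) u₂ v₂) (hc₁ : c₁ ∈ S) (hc₂ : c₂ ∈ S) (hne : c₁ ≠ c₂) (hb : b ≠ 0)
    (hl₁ : lin a b (toR2 c₁) = 1) (hl₂ : lin a b (toR2 c₂) = 1) {z : ℕ × ℕ} (hz : z ∈ S)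
    (hz1 : lin a b (toR2 z) = 1) : toR2 z ∈ segment ℝ (toR2 c₁) (toR2 c₂) := by
  by_cases hzc₁ : z = c₁
  · exact hzc₁ ▸ left_mem_segment ℝ _ _
  by_cases hzc₂ : z = c₂
  · exact hzc₂ ▸ right_mem_segment ℝ _ _
  obtain ⟨r, hr⟩ := mem_affineSpan_pair_iff_exists_lineMap_eq.mp
    (mem_affineSpan_pair_of_lin_eq hb (toR2_injective.ne hne) hl₁ hl₂ hz1)
  have e₁ := h₁.lin_le ⟨hz, hzc₁⟩
  have e₂ := h₂.lin_le ⟨hz, hzc₂⟩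
  rw [← hr, (lin _ _).apply_lineMap_eq] at e₁ e₂
  have := h₁.lin_le ⟨hc₂, hne.symm⟩
  have := h₁.one_lt_lin_self (hS.subset_posQuad hc₁)
  have := h₂.lin_le ⟨hc₁, hne⟩
  have := h₂.one_lt_lin_self (hS.subset_posQuad hc₂)
  rw [segment_eq_image_lineMap]
  exact ⟨r, ⟨by nlinarith, by nlinarith⟩, hr⟩

lemma lin_le_one_of_removable (hS : IsCutBy S α β) (h₁ : IsCutBy (S \ {c₁}) u₁ v₁)
    (h₂ : IsCutBy (S \ {c₂}) u₂ v₂) (hc₁ : c₁ ∈ S) (hc₂ : c₂ ∈ S) (ha : 0 < a) (hb : 0 < b)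
    (hl₁ : lin a b (toR2 c₁) = 1) (hl₂ : lin a b (toR2 c₂) = 1) (hx : c₂.1 < c₁.1)
    (hy : c₁.2 < c₂.2) {z : ℕ × ℕ} (hz : z ∈ S) : lin a b (toR2 z) ≤ 1 := by
  by_contra! hz1
  obtain ⟨d, hd, hmax⟩ := Set.exists_max_image S (fun z => lin a b (toR2 z)) hS.finite ⟨z, hz⟩
  have hd1 : 1 < lin a b (toR2 d) := hz1.trans_le (hmax z hz)
  have hdc₁ : d ≠ c₁ := by rintro rfl; linarith
  have hdc₂ : d ≠ c₂ := by rintro rfl; linarith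
  have hq₁ := hS.subset_posQuad hc₁
  have hq₂ := hS.subset_posQuad hc₂
  have hqd := hS.subset_posQuad hd
  have not_le : ∀ {c}, lin a b (toR2 c) = 1 → ¬ d ≤ c := fun hl hle =>
    (hl ▸ hd1).not_ge (lin_mono ha.le hb.le (toR2_mono hle))
  rcases lt_or_ge d.2 c₁.2 with hd₂ | hd₂
  · have hd₁ : c₁.1 < d.1 := by
      by_contra! h
      exact not_le hl₁ ⟨h, hd₂.le⟩
    exact h₁.not_le_chord hq₁ hb hc₂ hd (ne_of_apply_ne Prod.fst hx.ne) hdc₁ hx.le hd₁.le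
      (hx.trans hd₁) ⟨(hl₁.trans hl₂.symm).le, by linarith⟩
  rcases lt_or_ge d.1 c₂.1 with hd₁ | hd₁
  · have hd₂' : c₂.2 < d.2 := by
      by_contra! h
      exact not_le hl₂ ⟨hd₁.le, h⟩
    exact h₂.not_le_chord hq₂ hb hd hc₁ hdc₂ (ne_of_apply_ne Prod.fst hx.ne') hd₁.le hx.le
      (hd₁.trans hx) ⟨by linarith, (hl₂.trans hl₁.symm).le⟩
  -- otherwise reflecting `c₁` or `c₂` in `d` gives a cell, unless `d` is close to the origin
  rcases lt_or_ge c₁.1 (2 * d.1) with h₁d | h₁d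
  · refine hd1.not_ge (hl₁ ▸ h₁.lin_le_of_add_eq hq₁ (lin a b) hd hdc₁ hmax
      (e := (2 * d.1 - c₁.1, 2 * d.2 - c₁.2)) ⟨by omega, by have := hqd.2; omega⟩ ?_)
    ext <;> simp <;> omega
  rcases lt_or_ge c₂.2 (2 * d.2) with h₂d | h₂d
  · refine hd1.not_ge (hl₂ ▸ h₂.lin_le_of_add_eq hq₂ (lin a b) hd hdc₂ hmax
      (e := (2 * d.1 - c₂.1, 2 * d.2 - c₂.2)) ⟨by have := hqd.1; omega, by omega⟩ ?_)
    ext <;> simp <;> omega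
  have e₁ : 2 * (d.1 : ℝ) ≤ c₁.1 := by exact_mod_cast h₁d
  have e₂ : 2 * (d.2 : ℝ) ≤ c₂.2 := by exact_mod_cast h₂d
  have e₃ : (0 : ℝ) < c₁.2 := by exact_mod_cast hq₁.2
  have e₄ : (0 : ℝ) < c₂.1 := by exact_mod_cast hq₂.1
  simp only [lin_apply, toR2] at hd1 hl₁ hl₂
  nlinarith [mul_pos ha e₄, mul_pos hb e₃]

lemma exists_isEdgeCut_of_removableCell (hS : IsCutBy S α β) (hr₁ : RemovableCell S c₁)
    (hr₂ : RemovableCell S c₂) (hne : c₁ ≠ c₂) : ∃ a b, IsEdgeCut S c₁ c₂ a b := by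
  obtain ⟨hc₁, u₁, v₁, h₁⟩ := hr₁.imp_right isTriangularSet_iff.mp
  obtain ⟨hc₂, u₂, v₂, h₂⟩ := hr₂.imp_right isTriangularSet_iff.mp
  have hq₁ := hS.subset_posQuad hc₁
  have hq₂ := hS.subset_posQuad hc₂
  have h₁₂ := h₁.not_le_of_mem hq₁ hc₂ hne.symm
  have h₂₁ := h₂.not_le_of_mem hq₂ hc₁ hne
  wlog hx : c₂.1 < c₁.1 generalizing c₁ c₂ u₁ v₁ u₂ v₂
  · obtain ⟨a, b, h⟩ := this hr₂ hr₁ hne.symm hc₂ u₂ v₂ h₂ hc₁ u₁ v₁ h₁ hq₂ hq₁ h₂₁ h₁₂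
      (by simp only [Prod.le_def, not_and_or, not_le] at h₁₂ h₂₁; omega)
    exact ⟨a, b, h.symm⟩
  have hy : c₁.2 < c₂.2 := by
    simp only [Prod.le_def, not_and_or, not_le] at h₂₁
    omega
  obtain ⟨a, b, ha, hb, hl₁, hl₂⟩ := exists_pos_lin_eq_one_of_not_le hq₁ hq₂ h₁₂ h₂₁
  refine ⟨a, b, ⟨IsCutBy.of_forall ha hb hS.subset_posQuad
      (fun z hz => lin_le_one_of_removable hS h₁ h₂ hc₁ hc₂ ha hb hl₁ hl₂ hx hy hz)
      (fun d hd hdS => one_lt_lin_of_removable hS h₁ h₂ hc₁ hc₂ hne hb hl₁ hl₂ hx.ne' hd hdS),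
    hc₁, hc₂, hl₁, hl₂,
    fun z hz hz1 => mem_segment_of_removable hS h₁ h₂ hc₁ hc₂ hne hb.ne' hl₁ hl₂ hz hz1⟩⟩

end TwoRemovableCells

/-- two cells of a triangular partition are both removable iff they
are consecutive vertices of Conv(τ) and the line through them misses Conv(ℕ² \ τ). -/
theorem stmt3 (S : Set (ℕ × ℕ)) (hS : IsTriangularSet S) (c1 c2 : ℕ × ℕ)
    (h1 : c1 ∈ S) (h2 : c2 ∈ S) (hne : c1 ≠ c2) :
    (RemovableCell S c1 ∧ RemovableCell S c2) ↔
      (ConsecutiveVertices (convexHull ℝ (toR2 '' S)) (toR2 c1) (toR2 c2) ∧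
        (affineSpan ℝ {toR2 c1, toR2 c2} : Set (ℝ × ℝ)) ∩
          convexHull ℝ (toR2 '' (posQuad \ S)) = ∅) := by
  obtain ⟨α, β, hS⟩ := isTriangularSet_iff.mp hS
  constructor
  · rintro ⟨hr₁, hr₂⟩
    obtain ⟨a, b, h⟩ := exists_isEdgeCut_of_removableCell hS hr₁ hr₂ hne
    exact ⟨h.consecutiveVertices hne, h.affineSpan_inter_convexHull_eq_empty⟩
  · rintro ⟨hcv, hdisj⟩
    obtain ⟨a, b, h⟩ := exists_isEdgeCut_of_consecutiveVertices hS h1 h2 hcv hdisj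
    exact ⟨h.removableCell_left hne, h.symm.removableCell_left hne.symm⟩
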